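/- arXiv:math/0003091 — 4 statements merged into one kernel-verified Lean document; each statement's English description precedes it below -/
import Mathlib

section
/- Let d, h : [0,∞) → ℝ be nonnegative functions, and let 0 < k ≤ K be constants. Suppose that for all t ≥ 0: e^{kt} ≤ h(0)/h(t) ≤ e^{Kt}, and (2/k)·sinh(k·d(t)/2) ≤ h(t) ≤ (2/K)·sinh(K·d(t)/2), with h(t) > 0. If additionally d(0) ≤ 2/K and d is nonincreasing, then for all t ≥ 0: e^{kt}/2 ≤ d(0)/d(t) ≤ 2·e^{Kt}, provided d(t) > 0. -/
/-!
The hypothesis on `sinh` pins `h t` between `d t` and `2 d t`: from below since `x ≤ sinh x`,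
from above since `sinh x ≤ 2 x` on `[0, 1]`, which applies because `K d t / 2 ≤ K d 0 / 2 ≤ 1`.
So `d 0 / d t` agrees with `h 0 / h t` up to a factor `2`, and the bounds on `h 0 / h t` transfer.
-/

open Real

namespace Real

theorem sinh_le_two_mul {x : ℝ} (hx₀ : 0 ≤ x) (hx₁ : x ≤ 1) : sinh x ≤ 2 * x := by
  have hexp : exp x ≤ 1 + x + x ^ 2 := by
    have := abs_le.1 (abs_exp_sub_one_sub_id_le (abs_le.2 ⟨by linarith, hx₁⟩))
    linarith [this.2]
  have hexp_neg : 1 - x ≤ exp (-x) := by linarith [add_one_le_exp (-x)]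
  rw [sinh_eq]
  nlinarith

theorem le_two_div_mul_sinh_mul_div_two {c x : ℝ} (hc : 0 < c) (hx : 0 ≤ x) :
    x ≤ 2 / c * sinh (c * x / 2) :=
  calc x = 2 / c * (c * x / 2) := by field_simp
    _ ≤ 2 / c * sinh (c * x / 2) := by gcongr; exact self_le_sinh_iff.2 (by positivity)

theorem two_div_mul_sinh_mul_div_two_le {c x : ℝ} (hc : 0 < c) (hx : 0 ≤ x) (hcx : c * x ≤ 2) :
    2 / c * sinh (c * x / 2) ≤ 2 * x :=
  calc 2 / c * sinh (c * x / 2) ≤ 2 / c * (2 * (c * x / 2)) := by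
        gcongr; exact sinh_le_two_mul (by positivity) (by linarith)
    _ = 2 * x := by field_simp

end Real

theorem le_and_le_two_mul_of_sinh_bounds {k K x y : ℝ} (hk : 0 < k) (hK : 0 < K) (hx : 0 ≤ x)
    (hKx : K * x ≤ 2) (hy : 2 / k * sinh (k * x / 2) ≤ y ∧ y ≤ 2 / K * sinh (K * x / 2)) :
    x ≤ y ∧ y ≤ 2 * x :=
  ⟨(le_two_div_mul_sinh_mul_div_two hk hx).trans hy.1,
    hy.2.trans (two_div_mul_sinh_mul_div_two_le hK hx hKx)⟩

theorem div_div_two_le_div_and_div_le_two_mul_div {a b A B : ℝ} (haA : a ≤ A) (hA : A ≤ 2 * a)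
    (hb : 0 < b) (hbB : b ≤ B) (hB : B ≤ 2 * b) : A / B / 2 ≤ a / b ∧ a / b ≤ 2 * (A / B) := by
  have ha : 0 ≤ a := by linarith
  constructor
  · rw [div_right_comm]
    exact div_le_div₀ ha (by linarith) hb hbB
  · rw [show 2 * (A / B) = A / (B / 2) by ring]
    exact div_le_div₀ (ha.trans haA) haA (by linarith) (by linarith)

theorem exp_convergence_of_geodesics_general (d h : ℝ → ℝ) (k K : ℝ)
    (hk : 0 < k) (hkK : k ≤ K)
    (hexp : ∀ t, 0 ≤ t →
      Real.exp (k * t) ≤ h 0 / h t ∧ h 0 / h t ≤ Real.exp (K * t))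
    (hsinh : ∀ t, 0 ≤ t →
      (2 / k) * Real.sinh (k * d t / 2) ≤ h t ∧ h t ≤ (2 / K) * Real.sinh (K * d t / 2))
    (hd0 : d 0 ≤ 2 / K)
    (hmono : ∀ s t, 0 ≤ s → s ≤ t → d t ≤ d s) :
    ∀ t, 0 ≤ t → 0 < d t →
      Real.exp (k * t) / 2 ≤ d 0 / d t ∧ d 0 / d t ≤ 2 * Real.exp (K * t) := by
  intro t ht hdt
  have hK : 0 < K := hk.trans_le hkK
  have hdt_le : d t ≤ d 0 := hmono 0 t le_rfl ht
  have h_comparable : ∀ s, 0 ≤ s → 0 ≤ d s → d s ≤ d 0 → d s ≤ h s ∧ h s ≤ 2 * d s :=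
    fun s hs hds hds0 => le_and_le_two_mul_of_sinh_bounds hk hK hds
      ((le_div_iff₀' hK).1 (hds0.trans hd0)) (hsinh s hs)
  obtain ⟨hd0_le, hh0_le⟩ := h_comparable 0 le_rfl (hdt.le.trans hdt_le) le_rfl
  obtain ⟨hdt_le_ht, hht_le⟩ := h_comparable t ht hdt.le hdt_le
  obtain ⟨hlow, hhigh⟩ := hexp t ht
  obtain ⟨hratio_low, hratio_high⟩ :=
    div_div_two_le_div_and_div_le_two_mul_div hd0_le hh0_le hdt hdt_le_ht hht_le
  constructor <;> linarith

/-- Exponential convergence of asymptotic geodesics: if `d t` is the ambient distance and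
`h t` the horospherical distance between two asymptotic geodesics at time `t`, subject to
the stated comparison inequalities, then `e^{kt}/2 ≤ d 0 / d t ≤ 2 e^{Kt}`. -/
theorem exp_convergence_of_geodesics (d h : ℝ → ℝ) (k K : ℝ)
    (hk : 0 < k) (hkK : k ≤ K)
    (hd_nonneg : ∀ t, 0 ≤ t → 0 ≤ d t)
    (hh_pos : ∀ t, 0 ≤ t → 0 < h t)
    (hexp : ∀ t, 0 ≤ t →
      Real.exp (k * t) ≤ h 0 / h t ∧ h 0 / h t ≤ Real.exp (K * t))
    (hsinh : ∀ t, 0 ≤ t →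
      (2 / k) * Real.sinh (k * d t / 2) ≤ h t ∧ h t ≤ (2 / K) * Real.sinh (K * d t / 2))
    (hd0 : d 0 ≤ 2 / K)
    (hmono : ∀ s t, 0 ≤ s → s ≤ t → d t ≤ d s) :
    ∀ t, 0 ≤ t → 0 < d t →
      Real.exp (k * t) / 2 ≤ d 0 / d t ∧ d 0 / d t ≤ 2 * Real.exp (K * t) :=
  exp_convergence_of_geodesics_general d h k K hk hkK hexp hsinh hd0 hmono
end

section
/- Let G act on a simplicial tree T without edge inversions and with one orbit of edges. Let P ≤ G be a subgroup not fixing any vertex, let τ be the unique minimal P-invariant subtree, and suppose that for every g ∈ G such that g⁻¹e is an edge of τ (where e is a fixed edge of T with stabilizer contained in P), the intersection g⁻¹(Stab e)g ∩ P is infinite, and suppose every maximal subgroup of G containing an infinite intersection with P equals P and is its own normalizer. Then P equals the setwise stabilizer of τ, and every edge of T lies in exactly one G-translate of τ. -/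
/-!
If `g • τ` contains the edge `e = (a, b)`, then `g⁻¹ (Stab e) g ∩ P` is infinite and lies in
`g⁻¹ P g ∩ P`, so `g ∈ P`. Since the edges form one orbit, two translates `g₁ • τ` and
`g₂ • τ` sharing an edge satisfy `g₁⁻¹ g₂ ∈ P`, hence coincide. As `P` fixes no vertex, `τ`
is not a point, so it contains an edge and therefore a translate of `e`, which lies in `τ`
itself; this gives both claims.
-/

section

variable {G V : Type*} [Group G] (act : G →* Equiv.Perm V)

theorem image_act_image (g h : G) (S : Set V) : act g '' (act h '' S) = act (g * h) '' S := by
  rw [Set.image_image, map_mul]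
  rfl

theorem mem_image_act_iff (g : G) (S : Set V) (x : V) : x ∈ act g '' S ↔ act g⁻¹ x ∈ S := by
  rw [map_inv, Equiv.Perm.inv_def, ← Set.mem_image_equiv]

theorem image_act_eq_of_inv_mul_mem {P : Subgroup G} {τ : Set V}
    (hτinv : ∀ p ∈ P, act p '' τ = τ) {g k : G} (h : g⁻¹ * k ∈ P) :
    act g '' τ = act k '' τ :=
  calc act g '' τ = act g '' (act (g⁻¹ * k) '' τ) := by rw [hτinv _ h]
    _ = act k '' τ := by rw [image_act_image, mul_inv_cancel_left]

theorem mem_of_pair_subset_image_act {P : Subgroup G} {τ : Set V} {a b : V}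
    (hstabP : ∀ g : G, act g a = a → act g b = b → g ∈ P)
    (hinf : ∀ g : G, act g⁻¹ a ∈ τ → act g⁻¹ b ∈ τ →
      {y : G | (act (g * y * g⁻¹) a = a ∧ act (g * y * g⁻¹) b = b) ∧ y ∈ P}.Infinite)
    (hmaxP : ∀ g : G, {y : G | y ∈ P ∧ g * y * g⁻¹ ∈ P}.Infinite → g ∈ P)
    {g : G} (h : {a, b} ⊆ act g '' τ) : g ∈ P := by
  rw [Set.pair_subset_iff, mem_image_act_iff, mem_image_act_iff] at h
  exact hmaxP g <| (hinf g h.1 h.2).mono fun _ hy => ⟨hy.2, hstabP _ hy.1.1 hy.1.2⟩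

theorem inv_mul_mem_of_pair_subset_image_act {P : Subgroup G} {τ : Set V} {a b x y : V}
    (hkey : ∀ g : G, {a, b} ⊆ act g '' τ → g ∈ P)
    {k : G} (hk : act k '' {x, y} = {a, b}) {g₁ g₂ : G}
    (h₁ : {x, y} ⊆ act g₁ '' τ) (h₂ : {x, y} ⊆ act g₂ '' τ) : g₁⁻¹ * g₂ ∈ P := by
  have hk₁ : k * g₁ ∈ P :=
    hkey _ (by rw [← hk, ← image_act_image]; exact Set.image_mono h₁)
  have hk₂ : k * g₂ ∈ P :=
    hkey _ (by rw [← hk, ← image_act_image]; exact Set.image_mono h₂)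
  simpa [mul_assoc] using mul_mem (inv_mem hk₁) hk₂

theorem nontrivial_of_forall_image_act_eq {P : Subgroup G} {τ : Set V}
    (hPnofix : ¬∃ v : V, ∀ p ∈ P, act p v = v)
    (hτne : τ.Nonempty) (hτinv : ∀ p ∈ P, act p '' τ = τ) : τ.Nontrivial := by
  refine hτne.exists_eq_singleton_or_nontrivial.resolve_left ?_
  rintro ⟨w, rfl⟩
  exact hPnofix ⟨w, fun p hp => by simpa using hτinv p hp⟩

end

theorem SimpleGraph.exists_adj_of_walk_closed_of_nontrivial {V : Type*} {T : SimpleGraph V}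
    (hT : T.Preconnected) {S : Set V}
    (hS : ∀ u ∈ S, ∀ v ∈ S, ∀ q : T.Walk u v, ∀ x ∈ q.support, x ∈ S) (hSnt : S.Nontrivial) :
    ∃ x y : V, T.Adj x y ∧ {x, y} ⊆ S := by
  obtain ⟨u, hu, v, hv, huv⟩ := hSnt
  obtain ⟨q⟩ := hT u v
  cases q with
  | nil => exact absurd rfl huv
  | @cons _ w _ hw q =>
    exact ⟨u, w, hw, Set.pair_subset hu (hS u hu v hv (.cons hw q) w (by simp))⟩

theorem stabilizer_of_minimal_subtree_general {G V : Type*} [Group G]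
    (T : SimpleGraph V) (hT : T.IsTree)
    (act : G →* Equiv.Perm V)
    (oneorbit : ∀ u v u' v' : V, T.Adj u v → T.Adj u' v' →
      ∃ g : G, (act g u = u' ∧ act g v = v') ∨ (act g u = v' ∧ act g v = u'))
    (P : Subgroup G)
    (hPnofix : ¬∃ v : V, ∀ p ∈ P, act p v = v)
    (τ : Set V) (hτne : τ.Nonempty)
    (hτinv : ∀ p ∈ P, act p '' τ = τ)
    (hτsub : ∀ u ∈ τ, ∀ v ∈ τ, ∀ q : T.Walk u v, ∀ x ∈ q.support, x ∈ τ)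
    (a b : V) (hab : T.Adj a b)
    (hstabP : ∀ g : G, act g a = a → act g b = b → g ∈ P)
    (hinf : ∀ g : G, act g⁻¹ a ∈ τ → act g⁻¹ b ∈ τ →
      {y : G | (act (g * y * g⁻¹) a = a ∧ act (g * y * g⁻¹) b = b) ∧ y ∈ P}.Infinite)
    (hmaxP : ∀ g : G, {y : G | y ∈ P ∧ g * y * g⁻¹ ∈ P}.Infinite → g ∈ P) :
    (∀ g : G, act g '' τ = τ ↔ g ∈ P) ∧
      (∀ u v : V, T.Adj u v →
        ∃! S : Set V, (∃ g : G, S = act g '' τ) ∧ u ∈ S ∧ v ∈ S) := by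
  have oneorbit' : ∀ u v u' v' : V, T.Adj u v → T.Adj u' v' →
      ∃ g : G, act g '' {u, v} = {u', v'} := by
    simpa only [Set.image_pair, Set.pair_eq_pair_iff] using oneorbit
  have hkey : ∀ g : G, {a, b} ⊆ act g '' τ → g ∈ P :=
    fun _ => mem_of_pair_subset_image_act act hstabP hinf hmaxP
  obtain ⟨x, y, hxy, hxyτ⟩ := SimpleGraph.exists_adj_of_walk_closed_of_nontrivial
    hT.connected.preconnected hτsub (nontrivial_of_forall_image_act_eq act hPnofix hτne hτinv)
  obtain ⟨k, hk⟩ := oneorbit' x y a b hxy hab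
  have habτ : {a, b} ⊆ τ := by
    have hkτ : {a, b} ⊆ act k '' τ := hk ▸ Set.image_mono hxyτ
    rwa [hτinv k (hkey k hkτ)] at hkτ
  refine ⟨fun g => ⟨fun hg => hkey g (hg.symm ▸ habτ), hτinv g⟩, fun u v huv => ?_⟩
  obtain ⟨g, hg⟩ := oneorbit' a b u v hab huv
  have huvτ : {u, v} ⊆ act g '' τ := hg ▸ Set.image_mono habτ
  refine ⟨act g '' τ, ⟨⟨g, rfl⟩, Set.pair_subset_iff.mp huvτ⟩, ?_⟩
  rintro _ ⟨⟨g', rfl⟩, hu, hv⟩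
  obtain ⟨k', hk'⟩ := oneorbit' u v a b huv hab
  exact image_act_eq_of_inv_mul_mem act hτinv
    (inv_mul_mem_of_pair_subset_image_act act hkey hk' (Set.pair_subset hu hv) huvτ)

/-- Bass–Serre setup: `G` acts on a tree `T` without inversions with one orbit of edges,
`P ≤ G` fixes no vertex, `τ` is the unique minimal `P`-invariant subtree, `e = (a,b)` is an
edge with stabilizer contained in `P`; if for every `g` with `g⁻¹e` an edge of `τ` the group
`g⁻¹ (Stab e) g ∩ P` is infinite, and any `g` with `g⁻¹ P g ∩ P` infinite lies in `P`
(encoding that the maximal subgroup containing such intersections is `P` and is its own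
normalizer), then `P` is the setwise stabilizer of `τ` and every edge of `T` lies in exactly
one `G`-translate of `τ`. -/
theorem stabilizer_of_minimal_subtree {G V : Type*} [Group G]
    (T : SimpleGraph V) (hT : T.IsTree)
    (act : G →* Equiv.Perm V)
    (hadj : ∀ (g : G) (u v : V), T.Adj u v → T.Adj (act g u) (act g v))
    (noinv : ∀ (g : G) (u v : V), T.Adj u v → ¬(act g u = v ∧ act g v = u))
    (oneorbit : ∀ u v u' v' : V, T.Adj u v → T.Adj u' v' →
      ∃ g : G, (act g u = u' ∧ act g v = v') ∨ (act g u = v' ∧ act g v = u'))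
    (P : Subgroup G)
    (hPnofix : ¬∃ v : V, ∀ p ∈ P, act p v = v)
    (τ : Set V) (hτne : τ.Nonempty)
    (hτinv : ∀ p ∈ P, act p '' τ = τ)
    (hτsub : ∀ u ∈ τ, ∀ v ∈ τ, ∀ q : T.Walk u v, ∀ x ∈ q.support, x ∈ τ)
    (hτmin : ∀ σ : Set V, σ.Nonempty → (∀ p ∈ P, act p '' σ = σ) →
      (∀ u ∈ σ, ∀ v ∈ σ, ∀ q : T.Walk u v, ∀ x ∈ q.support, x ∈ σ) → σ ⊆ τ → σ = τ)
    (a b : V) (hab : T.Adj a b)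
    (hstabP : ∀ g : G, act g a = a → act g b = b → g ∈ P)
    (hinf : ∀ g : G, act g⁻¹ a ∈ τ → act g⁻¹ b ∈ τ →
      {y : G | (act (g * y * g⁻¹) a = a ∧ act (g * y * g⁻¹) b = b) ∧ y ∈ P}.Infinite)
    (hmaxP : ∀ g : G, {y : G | y ∈ P ∧ g * y * g⁻¹ ∈ P}.Infinite → g ∈ P) :
    (∀ g : G, act g '' τ = τ ↔ g ∈ P) ∧
      (∀ u v : V, T.Adj u v →
        ∃! S : Set V, (∃ g : G, S = act g '' τ) ∧ u ∈ S ∧ v ∈ S) :=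
  stabilizer_of_minimal_subtree_general T hT act oneorbit P hPnofix τ hτne hτinv hτsub a b hab
    hstabP hinf hmaxP
end

section
/- Let T be a simplicial tree with a group G acting on it, and let Q be a collection of subtrees of T such that every edge of T lies in exactly one member of Q. Define a bipartite graph S(Q) with vertex set V(T) ⊔ Q, where v ∈ V(T) is adjacent to η ∈ Q iff v is a vertex of η. Then S(Q) is a tree. -/
/-- The bipartite incidence graph `S(Q)`: vertices are vertices of the tree together with the
members of `Q`, and `v` is adjacent to `η` iff `v ∈ η`. -/
def incidenceGraph {V : Type*} (Q : Set (Set V)) : SimpleGraph (V ⊕ ↥Q) where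
  Adj a b :=
    (∃ (v : V) (η : ↥Q), a = Sum.inl v ∧ b = Sum.inr η ∧ v ∈ (η : Set V)) ∨
    (∃ (v : V) (η : ↥Q), b = Sum.inl v ∧ a = Sum.inr η ∧ v ∈ (η : Set V))
  symm := by
    constructor
    intro a b h
    rcases h with ⟨v, η, h1, h2, h3⟩ | ⟨v, η, h1, h2, h3⟩
    · exact Or.inr ⟨v, η, h1, h2, h3⟩
    · exact Or.inl ⟨v, η, h1, h2, h3⟩
  loopless := by
    constructor
    rintro a (⟨v, η, rfl, h, -⟩ | ⟨v, η, rfl, h, -⟩) <;> simp at h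

/-!
A `T`-edge `uv` lying in `η ∈ Q` gives the path `u – η – v` in `S(Q)`, so `S(Q)` is connected.
A cycle of `S(Q)` through `η` leaves and re-enters `η` at vertices `w ≠ u` of `T`, and the rest of
the cycle avoids `η`. Replacing each step `x – η' – y` of it by a walk from `x` to `y` inside `η'`
gives a walk in `T` from `w` to `u` whose edges all lie in members of `Q` other than `η`. Since `T`
is a tree, that walk covers the path from `w` to `u` inside `η`, so the first edge of this path
lies in two members of `Q`.
-/

open SimpleGraph

theorem SimpleGraph.IsAcyclic.isPath_edges_subset {V : Type*} {G : SimpleGraph V}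
    (hG : G.IsAcyclic) {u v : V} {p : G.Walk u v} (hp : p.IsPath) (q : G.Walk u v) :
    p.edges ⊆ q.edges := by
  classical
  obtain rfl : p = q.bypass :=
    congrArg Subtype.val ((hG.subsingleton_path u v).elim ⟨p, hp⟩ ⟨q.bypass, q.bypass_isPath⟩)
  exact q.edges_bypass_subset_edges

theorem SimpleGraph.Walk.edges_subset_sym2 {V : Type*} {G : SimpleGraph V} {s : Set V}
    {u v : V} {p : G.Walk u v} (hp : ∀ x ∈ p.support, x ∈ s) : ∀ e ∈ p.edges, e ∈ s.sym2 :=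
  fun _ he => Set.mem_sym2_iff_subset.2 fun _ hx => hp _ (p.mem_support_of_mem_edges he hx)

namespace incidenceGraph

variable {V : Type*} {Q : Set (Set V)} {T : SimpleGraph V}

@[simp]
theorem adj_inl_inr {v : V} {η : ↥Q} :
    (incidenceGraph Q).Adj (.inl v) (.inr η) ↔ v ∈ (η : Set V) := by
  simp [incidenceGraph]

@[simp]
theorem adj_inr_inl {v : V} {η : ↥Q} :
    (incidenceGraph Q).Adj (.inr η) (.inl v) ↔ v ∈ (η : Set V) := by
  simp [incidenceGraph]

@[simp]
theorem not_adj_inl_inl {v w : V} : ¬(incidenceGraph Q).Adj (.inl v) (.inl w) := by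
  simp [incidenceGraph]

@[simp]
theorem not_adj_inr_inr {η η' : ↥Q} : ¬(incidenceGraph Q).Adj (.inr η) (.inr η') := by
  simp [incidenceGraph]

section Connected

variable (hcover : ∀ u v, T.Adj u v → ∃ η : ↥Q, u ∈ (η : Set V) ∧ v ∈ (η : Set V))
include hcover

theorem reachable_inl {u v : V} (h : T.Reachable u v) :
    (incidenceGraph Q).Reachable (.inl u) (.inl v) := by
  obtain ⟨p⟩ := h
  induction p with
  | nil => rfl
  | cons h _ ih =>
    obtain ⟨η, hu, hv⟩ := hcover _ _ h
    exact ((adj_inl_inr.2 hu).reachable.trans (adj_inr_inl.2 hv).reachable).trans ih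

theorem connected (hT : T.Connected) (hne : ∀ η ∈ Q, η.Nonempty) :
    (incidenceGraph Q).Connected := by
  have hinl : ∀ a, ∃ v, (incidenceGraph Q).Reachable (.inl v) a := by
    rintro (v | η)
    · exact ⟨v, .rfl⟩
    · obtain ⟨v, hv⟩ := hne η η.2
      exact ⟨v, (adj_inl_inr.2 hv).reachable⟩
  have : Nonempty V := hT.nonempty
  refine ⟨fun a b => ?_⟩
  obtain ⟨u, hu⟩ := hinl a
  obtain ⟨v, hv⟩ := hinl b
  exact hu.symm.trans ((reachable_inl hcover (hT.preconnected u v)).trans hv)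

end Connected

/-- A member of `Q` is sent to an arbitrary element of it (a junk value if it is empty). -/
noncomputable def basepoint [Nonempty V] : V ⊕ ↥Q → V :=
  Sum.elim id fun η => Classical.epsilon (· ∈ (η : Set V))

theorem basepoint_mem [Nonempty V] {v : V} {η : ↥Q} (hv : v ∈ (η : Set V)) :
    basepoint (.inr η) ∈ (η : Set V) :=
  Classical.epsilon_spec ⟨v, hv⟩

section Acyclic

variable (hconn : ∀ η ∈ Q, ∀ u ∈ η, ∀ v ∈ η, ∃ p : T.Walk u v, ∀ x ∈ p.support, x ∈ η)
include hconn

theorem exists_walk_basepoint_of_adj [Nonempty V] {a b : V ⊕ ↥Q}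
    (h : (incidenceGraph Q).Adj a b) :
    ∃ η : ↥Q, (.inr η = a ∨ .inr η = b) ∧
      ∃ p : T.Walk (basepoint a) (basepoint b), ∀ x ∈ p.support, x ∈ (η : Set V) := by
  rcases a with v | η <;> rcases b with w | η' <;> simp only [not_adj_inl_inl, not_adj_inr_inr,
    adj_inl_inr, adj_inr_inl] at h
  · exact ⟨η', .inr rfl, hconn _ η'.2 _ h _ (basepoint_mem h)⟩
  · exact ⟨η, .inl rfl, hconn _ η.2 _ (basepoint_mem h) _ h⟩

theorem exists_walk_basepoint [Nonempty V] {a b : V ⊕ ↥Q} (W : (incidenceGraph Q).Walk a b) :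
    ∃ p : T.Walk (basepoint a) (basepoint b),
      ∀ e ∈ p.edges, ∃ η : ↥Q, .inr η ∈ W.support ∧ e ∈ (η : Set V).sym2 := by
  induction W with
  | nil => exact ⟨.nil, by simp⟩
  | cons h W ih =>
    obtain ⟨η, hη, p, hp⟩ := exists_walk_basepoint_of_adj hconn h
    obtain ⟨q, hq⟩ := ih
    refine ⟨p.append q, fun e he => ?_⟩
    rcases List.mem_append.1 (Walk.edges_append p q ▸ he) with he | he
    · exact ⟨η, by rcases hη with rfl | rfl <;> simp, Walk.edges_subset_sym2 hp e he⟩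
    · obtain ⟨η', hη', he'⟩ := hq e he
      exact ⟨η', by simp [hη'], he'⟩

variable (hT : T.IsAcyclic)
  (huniq : ∀ u v, T.Adj u v → ∀ {η η' : ↥Q}, (u ∈ (η : Set V) ∧ v ∈ (η : Set V)) →
    (u ∈ (η' : Set V) ∧ v ∈ (η' : Set V)) → η = η')
include hT huniq

theorem mk_inr_inl_mem_edges_of_isPath {η : ↥Q} {u : V} (hu : u ∈ (η : Set V))
    {p : (incidenceGraph Q).Walk (.inr η) (.inl u)} (hp : p.IsPath) :
    s(.inr η, .inl u) ∈ p.edges := by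
  classical
  have : Nonempty V := ⟨u⟩
  cases p with
  | @cons _ b _ h q =>
    obtain ⟨-, hηq⟩ := (Walk.cons_isPath_iff _ _).1 hp
    cases b with
    | inr => simp at h
    | inl w =>
      rw [adj_inr_inl] at h
      obtain rfl | hwu := eq_or_ne w u
      · simp
      exfalso
      obtain ⟨r, hr⟩ := exists_walk_basepoint hconn q
      obtain ⟨s, hs⟩ := hconn _ η.2 _ h _ hu
      obtain ⟨x, hwx, s', hs'⟩ := Walk.not_nil_iff.1 (s.bypass.not_nil_of_ne hwu)
      have hwx_mem : s(w, x) ∈ s.bypass.edges := by simp [hs']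
      obtain ⟨η', hη'q, hη'⟩ := hr _ (hT.isPath_edges_subset s.bypass_isPath r hwx_mem)
      have hη : s(w, x) ∈ (η : Set V).sym2 :=
        Walk.edges_subset_sym2 (fun y hy => hs y (s.support_bypass_subset_support hy)) _ hwx_mem
      obtain rfl := huniq w x hwx hη' hη
      exact hηq hη'q

theorem isAcyclic : (incidenceGraph Q).IsAcyclic := by
  intro a c hc
  cases c with
  | nil => exact hc.ne_nil rfl
  | @cons _ b _ h p =>
    obtain ⟨hp, hnotMem⟩ := (Walk.cons_isCycle_iff p h).1 hc
    rcases a with v | η <;> rcases b with w | η <;> simp only [not_adj_inl_inl,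
      not_adj_inr_inr, adj_inl_inr, adj_inr_inl] at h
    · exact hnotMem (Sym2.eq_swap ▸ mk_inr_inl_mem_edges_of_isPath hconn hT huniq h hp)
    · exact hnotMem (by simpa using mk_inr_inl_mem_edges_of_isPath hconn hT huniq h hp.reverse)

end Acyclic

end incidenceGraph

theorem incidenceGraph_isTree_general {V : Type*}
    (T : SimpleGraph V) (hT : T.IsTree)
    (Q : Set (Set V))
    (hne : ∀ η ∈ Q, η.Nonempty)
    (hsubtree : ∀ η ∈ Q, ∀ u ∈ η, ∀ v ∈ η, ∃ p : T.Walk u v, ∀ x ∈ p.support, x ∈ η)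
    (hedge : ∀ u v : V, T.Adj u v →
      ∃! η : ↥Q, u ∈ (η : Set V) ∧ v ∈ (η : Set V)) :
    (incidenceGraph Q).IsTree :=
  ⟨incidenceGraph.connected (fun u v h => (hedge u v h).exists) hT.connected hne,
    incidenceGraph.isAcyclic hsubtree hT.isAcyclic fun u v h => (hedge u v h).unique⟩

/-- If `T` is a simplicial tree with a group `G` acting on it, and `Q` is a collection of
(nonempty) subtrees of `T` such that every edge of `T` lies in exactly one member of `Q`,
then the bipartite incidence graph `S(Q)` is a tree. -/
theorem incidenceGraph_isTree {V G : Type*} [Group G]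
    (T : SimpleGraph V) (hT : T.IsTree)
    (act : G →* Equiv.Perm V)
    (hadj : ∀ (g : G) (u v : V), T.Adj u v → T.Adj (act g u) (act g v))
    (Q : Set (Set V))
    (hne : ∀ η ∈ Q, η.Nonempty)
    (hsubtree : ∀ η ∈ Q, ∀ u ∈ η, ∀ v ∈ η, ∃ p : T.Walk u v, ∀ x ∈ p.support, x ∈ η)
    (hedge : ∀ u v : V, T.Adj u v →
      ∃! η : ↥Q, u ∈ (η : Set V) ∧ v ∈ (η : Set V)) :
    (incidenceGraph Q).IsTree :=
  incidenceGraph_isTree_general T hT Q hne hsubtree hedge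
end

section
/- Fix constants 0 < k ≤ K and reals 0 < σ < ε < 1. Suppose a geodesic ray γ in a cusp crosses the ε-injectivity-radius level at time t_ε ∈ [0, d] and the σ-level at time t_σ > t_ε, and that for group elements g, h one has d(g γ(t_σ), γ(t_σ)) = 2σ, d(g γ(t_ε), γ(t_ε)) ≥ 2ε, d(h γ(t_ε), γ(t_ε)) = 2ε, d(h γ(t_σ), γ(t_σ)) ≥ 2σ, and the exponential comparison e^{k(t−s)}/2 ≤ d(φγ(s), γ(s))/d(φγ(t), γ(t)) ≤ 2e^{K(t−s)} for t > s and isometries φ. Then K^{-1}·ln(ε/(2σ)) ≤ t_σ − t_ε ≤ k^{-1}·ln(2ε/σ). -/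
/-!
The displacement of `g` drops from at least `2ε` to exactly `2σ` between `tε` and `tσ`, so its
ratio, at least `ε/σ`, is bounded by the upper exponential comparison; this bounds the travel
time from below. Symmetrically the displacement of `h` drops from `2ε` to at least `2σ`, and
the lower exponential comparison bounds the travel time from above.
-/

open Real

theorem le_inv_mul_log_of_le_two_mul_exp {K τ x : ℝ} (hK : 0 < K) (hx : 0 < x)
    (h : x ≤ 2 * exp (K * τ)) : K⁻¹ * log (x / 2) ≤ τ := by
  rw [inv_mul_le_iff₀ hK, log_le_iff_le_exp (by positivity)]
  linarith

theorem le_inv_mul_log_two_mul_of_exp_div_two_le {k τ x : ℝ} (hk : 0 < k)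
    (h : exp (k * τ) / 2 ≤ x) : τ ≤ k⁻¹ * log (2 * x) := by
  have hx : 0 < x := (div_pos (exp_pos _) two_pos).trans_le h
  rw [le_inv_mul_iff₀ hk, le_log_iff_exp_le (by positivity)]
  linarith

theorem cusp_travel_time_general (k K σ ε tε tσ : ℝ) (u v : ℝ → ℝ)
    (hk : 0 < k) (hkK : k ≤ K)
    (hσ : 0 < σ) (hσε : σ < ε)
    (htεσ : tε < tσ)
    (huσ : u tσ = 2 * σ) (huε : 2 * ε ≤ u tε)
    (hvε : v tε = 2 * ε) (hvσ : 2 * σ ≤ v tσ)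
    (hcomp_u : ∀ s t, s < t →
      Real.exp (k * (t - s)) / 2 ≤ u s / u t ∧ u s / u t ≤ 2 * Real.exp (K * (t - s)))
    (hcomp_v : ∀ s t, s < t →
      Real.exp (k * (t - s)) / 2 ≤ v s / v t ∧ v s / v t ≤ 2 * Real.exp (K * (t - s))) :
    K⁻¹ * Real.log (ε / (2 * σ)) ≤ tσ - tε ∧ tσ - tε ≤ k⁻¹ * Real.log (2 * ε / σ) := by
  have hε : 0 < ε := hσ.trans hσε
  have hratio : 2 * ε / (2 * σ) = ε / σ := mul_div_mul_left ε σ two_ne_zero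
  constructor
  · have hgrowth : ε / σ ≤ 2 * exp (K * (tσ - tε)) := calc
        ε / σ = 2 * ε / (2 * σ) := hratio.symm
        _ ≤ u tε / (2 * σ) := by gcongr
        _ = u tε / u tσ := by rw [huσ]
        _ ≤ 2 * exp (K * (tσ - tε)) := (hcomp_u tε tσ htεσ).2
    simpa only [div_div, mul_comm σ] using
      le_inv_mul_log_of_le_two_mul_exp (hk.trans_le hkK) (div_pos hε hσ) hgrowth
  · have hdecay : exp (k * (tσ - tε)) / 2 ≤ ε / σ := calc
        exp (k * (tσ - tε)) / 2 ≤ v tε / v tσ := (hcomp_v tε tσ htεσ).1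
        _ ≤ 2 * ε / (2 * σ) := by
          rw [hvε]; exact div_le_div_of_nonneg_left (by positivity) (by positivity) hvσ
        _ = ε / σ := hratio
    simpa only [mul_div_assoc] using le_inv_mul_log_two_mul_of_exp_div_two_le hk hdecay

/-- Cusp travel-time estimate: with the exponential displacement comparison along a geodesic
ray in a cusp, the time to travel from the `ε`-injectivity level to the `σ`-level is pinned
between `K⁻¹ ln(ε/(2σ))` and `k⁻¹ ln(2ε/σ)`. Here `u t = d(g γ(t), γ(t))` and
`v t = d(h γ(t), γ(t))` are the displacement functions of the group elements `g`, `h`. -/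
theorem cusp_travel_time (k K σ ε d tε tσ : ℝ) (u v : ℝ → ℝ)
    (hk : 0 < k) (hkK : k ≤ K)
    (hσ : 0 < σ) (hσε : σ < ε) (hε : ε < 1)
    (htε0 : 0 ≤ tε) (htεd : tε ≤ d) (htεσ : tε < tσ)
    (hu_pos : ∀ t, 0 < u t) (hv_pos : ∀ t, 0 < v t)
    (huσ : u tσ = 2 * σ) (huε : 2 * ε ≤ u tε)
    (hvε : v tε = 2 * ε) (hvσ : 2 * σ ≤ v tσ)
    (hcomp_u : ∀ s t, s < t →
      Real.exp (k * (t - s)) / 2 ≤ u s / u t ∧ u s / u t ≤ 2 * Real.exp (K * (t - s)))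
    (hcomp_v : ∀ s t, s < t →
      Real.exp (k * (t - s)) / 2 ≤ v s / v t ∧ v s / v t ≤ 2 * Real.exp (K * (t - s))) :
    K⁻¹ * Real.log (ε / (2 * σ)) ≤ tσ - tε ∧ tσ - tε ≤ k⁻¹ * Real.log (2 * ε / σ) :=
  cusp_travel_time_general k K σ ε tε tσ u v hk hkK hσ hσε htεσ huσ huε hvε hvσ hcomp_u hcomp_v
end
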